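/- Let Γ be an alphabet, # a letter not in Γ, k ∈ ℕ, and let u₁,…,u_k, v₁,…,v_k, w, w' be words over Γ. Let L₁ = { x₀·#·x₁·#·⋯·#·x_k : x₀·u₁·x₁ ⋯ u_k·x_k = w } and L₂ = { x₀·#·x₁·#·⋯·#·x_k : x₀·v₁·x₁ ⋯ v_k·x_k = w' } be the solution languages of the two sequential word equations (which share the same variable sequence x₀,…,x_k). Then the language L₁ ∩ L₂ over Γ ∪ {#} is recognized by a deterministic finite automaton with at most (k+1)·(min(|w|, |w'|)+1) states. -/

import Mathlib

/-- A deterministic finite automaton with a partial transition function. -/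
structure PartialDFA (α : Type*) (σ : Type*) where
  step : σ → α → Option σ
  start : σ
  accept : Set σ

namespace PartialDFA

/-- Evaluation of a partial DFA from an optional state (`none` meaning "stuck"). -/
def evalFrom {α σ : Type*} (M : PartialDFA α σ) : Option σ → List α → Option σ
  | s, [] => s
  | s, a :: as => M.evalFrom (s.bind fun q => M.step q a) as

/-- The language accepted by a partial DFA. -/
def accepts {α σ : Type*} (M : PartialDFA α σ) : Set (List α) :=
  { w | ∃ q ∈ M.accept, M.evalFrom (some M.start) w = some q }

end PartialDFA

/-- The word `x₀·#·x₁·#·⋯·#·x_k` over the alphabet `Option Γ`, where the separator `#`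
is the letter `none` and letters of `Γ` are embedded via `some`. -/
def hashJoin {Γ : Type*} {k : ℕ} (x : Fin (k + 1) → List Γ) : List (Option Γ) :=
  (x 0).map some ++ (List.finRange k).flatMap fun j => none :: (x j.succ).map some

/-- The solution language `{ x₀·#·x₁·#·⋯·#·x_k : x₀·u₁·x₁·u₂·x₂ ⋯ u_k·x_k = w }` of the
sequential word equation given by the constants `u₁,…,u_k` (here `u 0, …, u (k-1)`)
and `w`. -/
def eqnSolutions {Γ : Type*} {k : ℕ} (u : Fin k → List Γ) (w : List Γ) :
    Set (List (Option Γ)) :=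
  { s | ∃ x : Fin (k + 1) → List Γ, s = hashJoin x ∧
      x 0 ++ (List.finRange k).flatMap (fun j => u j ++ x j.succ) = w }

/-!
Reading `x₀·#·x₁·#⋯` left to right, an automaton for one equation only needs to remember the
constants `uᵢ` not yet read and the suffix of `w` not yet matched. In the product of the
automata for the two equations, both components are determined by the number `i ≤ k` of
separators and the number `p` of letters read so far, and `p ≤ min(|w|, |w'|)` as long as
neither component is stuck; restricting the product to these states gives the bound.
-/

namespace PartialDFA

variable {α σ τ : Type*} (M : PartialDFA α σ) (N : PartialDFA α τ)

def acceptsFrom (q : σ) : Set (List α) :=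
  { s | ∃ q' ∈ M.accept, M.evalFrom (some q) s = some q' }

theorem accepts_eq_acceptsFrom : M.accepts = M.acceptsFrom M.start := rfl

theorem evalFrom_none (s : List α) : M.evalFrom none s = none := by
  induction s with
  | nil => rfl
  | cons a s ih => exact ih

theorem nil_mem_acceptsFrom {q : σ} : [] ∈ M.acceptsFrom q ↔ q ∈ M.accept := by
  simp [acceptsFrom, evalFrom]

theorem cons_mem_acceptsFrom {q : σ} {a : α} {s : List α} :
    a :: s ∈ M.acceptsFrom q ↔ ∃ q', M.step q a = some q' ∧ s ∈ M.acceptsFrom q' := by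
  simp only [acceptsFrom, Set.mem_ofPred_eq, evalFrom, Option.bind_some]
  cases M.step q a <;> simp [evalFrom_none]

theorem acceptsFrom_eq_of_residual (L : σ → Set (List α))
    (hnil : ∀ q, [] ∈ L q ↔ q ∈ M.accept)
    (hcons : ∀ q a s, a :: s ∈ L q ↔ ∃ q', M.step q a = some q' ∧ s ∈ L q') (q : σ) :
    M.acceptsFrom q = L q := by
  ext s
  induction s generalizing q with
  | nil => rw [nil_mem_acceptsFrom, hnil]
  | cons a s ih => simp only [cons_mem_acceptsFrom, hcons, ih]

def prod : PartialDFA α (σ × τ) where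
  step q a := Option.map₂ Prod.mk (M.step q.1 a) (N.step q.2 a)
  start := (M.start, N.start)
  accept := M.accept ×ˢ N.accept

theorem prod_step_eq_some {q q' : σ × τ} {a : α} :
    (M.prod N).step q a = some q' ↔ M.step q.1 a = some q'.1 ∧ N.step q.2 a = some q'.2 := by
  simp [prod, Option.map₂_eq_some_iff, Prod.ext_iff]

theorem acceptsFrom_prod (q : σ × τ) :
    (M.prod N).acceptsFrom q = M.acceptsFrom q.1 ∩ N.acceptsFrom q.2 := by
  refine acceptsFrom_eq_of_residual _ (fun q => M.acceptsFrom q.1 ∩ N.acceptsFrom q.2)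
    (fun q => ?_) (fun q a s => ?_) q
  · simp [nil_mem_acceptsFrom, prod]
  · simp only [Set.mem_inter_iff, cons_mem_acceptsFrom, prod, Option.map₂_eq_some_iff,
      Option.mem_def, Prod.exists, Prod.mk.injEq]
    aesop

theorem accepts_prod : (M.prod N).accepts = M.accepts ∩ N.accepts :=
  M.acceptsFrom_prod N _

def restrict (S : Set σ) (hstart : M.start ∈ S)
    (hstep : ∀ q ∈ S, ∀ a q', M.step q a = some q' → q' ∈ S) : PartialDFA α S where
  step q a := (M.step q a).pmap (fun q' h => ⟨q', h⟩) (hstep q q.2 a)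
  start := ⟨M.start, hstart⟩
  accept := Subtype.val ⁻¹' M.accept

theorem acceptsFrom_restrict (S : Set σ) (hstart : M.start ∈ S)
    (hstep : ∀ q ∈ S, ∀ a q', M.step q a = some q' → q' ∈ S) (q : S) :
    (M.restrict S hstart hstep).acceptsFrom q = M.acceptsFrom q := by
  refine acceptsFrom_eq_of_residual _ (fun q : S => M.acceptsFrom q) (fun q => ?_)
    (fun q a s => ?_) q
  · simp [nil_mem_acceptsFrom, restrict]
  · simp only [cons_mem_acceptsFrom, restrict, Option.pmap_eq_some_iff, Subtype.exists,
      Subtype.mk.injEq]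
    constructor
    · rintro ⟨q', hq', hs⟩
      have hq'S := hstep q q.2 a q' hq'
      exact ⟨q', hq'S, ⟨q', hq'S, hq', rfl⟩, hs⟩
    · rintro ⟨q', -, ⟨_, _, hq', rfl⟩, hs⟩
      exact ⟨_, hq', hs⟩

theorem exists_card_le_of_step_mem_range {σ : Type} {ι : Type*} [Fintype ι]
    (M : PartialDFA α σ) (f : ι → σ) (hstart : M.start ∈ Set.range f)
    (hstep : ∀ i a q, M.step (f i) a = some q → q ∈ Set.range f) :
    ∃ (τ : Type) (_ : Fintype τ) (N : PartialDFA α τ),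
      Fintype.card τ ≤ Fintype.card ι ∧ N.accepts = M.accepts := by
  classical
  refine ⟨Set.range f, inferInstance, M.restrict _ hstart ?_, Fintype.card_range_le f,
    M.acceptsFrom_restrict _ hstart _ _⟩
  rintro _ ⟨i, rfl⟩
  exact hstep i

end PartialDFA

section SequentialEquation

variable {Γ : Type*}

def seqSolutions : List (List Γ) → List Γ → Set (List (Option Γ))
  | [], r => {r.map some}
  | u :: us, r =>
    {s | ∃ x r', r = x ++ u ++ r' ∧ ∃ t ∈ seqSolutions us r', s = x.map some ++ none :: t}

theorem nil_mem_seqSolutions {us : List (List Γ)} {r : List Γ} :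
    [] ∈ seqSolutions us r ↔ us = [] ∧ r = [] := by
  cases us <;> simp [seqSolutions]

theorem some_cons_mem_seqSolutions {us : List (List Γ)} {r : List Γ} {a : Γ}
    {s : List (Option Γ)} :
    some a :: s ∈ seqSolutions us r ↔ ∃ r', r = a :: r' ∧ s ∈ seqSolutions us r' := by
  cases us with
  | nil => cases r <;> simp [seqSolutions, and_comm, eq_comm (a := a)]
  | cons u us =>
    simp only [seqSolutions, Set.mem_ofPred_eq]
    constructor
    · rintro ⟨_ | ⟨b, x⟩, r', rfl, t, ht, hs⟩
      · simp at hs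
      · simp only [List.map_cons, List.cons_append, List.cons.injEq, Option.some.injEq] at hs
        exact ⟨_, by rw [hs.1]; rfl, x, r', rfl, t, ht, hs.2⟩
    · rintro ⟨_, rfl, x, r', rfl, t, ht, rfl⟩
      exact ⟨a :: x, r', rfl, t, ht, rfl⟩

theorem none_cons_mem_seqSolutions {us : List (List Γ)} {r : List Γ} {s : List (Option Γ)} :
    none :: s ∈ seqSolutions us r ↔
      ∃ u us' r', us = u :: us' ∧ r = u ++ r' ∧ s ∈ seqSolutions us' r' := by
  cases us with
  | nil => cases r <;> simp [seqSolutions]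
  | cons u us =>
    simp only [seqSolutions, Set.mem_ofPred_eq, List.cons.injEq]
    constructor
    · rintro ⟨_ | ⟨b, x⟩, r', rfl, t, ht, hs⟩
      · simp only [List.map_nil, List.nil_append, List.cons.injEq, true_and] at hs
        exact ⟨u, us, r', ⟨rfl, rfl⟩, rfl, hs ▸ ht⟩
      · simp at hs
    · rintro ⟨_, _, r', ⟨rfl, rfl⟩, rfl, hs⟩
      exact ⟨[], r', rfl, s, hs, rfl⟩

theorem hashJoin_cons {k : ℕ} (x₀ : List Γ) (x : Fin (k + 1) → List Γ) :
    hashJoin (Fin.cons x₀ x : Fin (k + 2) → List Γ) = x₀.map some ++ none :: hashJoin x := by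
  simp [hashJoin, List.finRange_succ, List.flatMap_map]

theorem eqnSolutions_eq_seqSolutions {k : ℕ} (u : Fin k → List Γ) (w : List Γ) :
    eqnSolutions u w = seqSolutions (List.ofFn u) w := by
  induction k generalizing w with
  | zero => ext s; simp [eqnSolutions, seqSolutions, hashJoin, Fin.exists_fin_succ_pi]
  | succ k ih =>
    ext s
    simp only [eqnSolutions, List.ofFn_succ, seqSolutions, ← ih, Set.mem_ofPred_eq,
      Fin.exists_fin_succ_pi, hashJoin_cons]
    simp only [List.finRange_succ, List.flatMap_cons, List.flatMap_map, Fin.cons_zero,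
      Fin.cons_succ]
    constructor
    · rintro ⟨x₀, x₁, x, rfl, rfl⟩
      exact ⟨x₀, _, by simp only [List.append_assoc], _, ⟨x₁, x, rfl, rfl⟩, rfl⟩
    · rintro ⟨x₀, _, rfl, _, ⟨x₁, x, rfl, rfl⟩, rfl⟩
      exact ⟨x₀, x₁, x, rfl, by simp only [List.append_assoc]⟩

end SequentialEquation

section SequentialEquationDFA

variable {Γ : Type*} [DecidableEq Γ]

/-- A state `(us, r)` holds the constants still to be read and the part of the right-hand side
still to be matched. -/
def eqnStep : List (List Γ) × List Γ → Option Γ → Option (List (List Γ) × List Γ)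
  | (us, b :: r), some a => if a = b then some (us, r) else none
  | (u :: us, r), none => if u <+: r then some (us, r.drop u.length) else none
  | _, _ => none

theorem eqnStep_some_eq_some {c q : List (List Γ) × List Γ} {a : Γ} :
    eqnStep c (some a) = some q ↔ c.2 = a :: q.2 ∧ c.1 = q.1 := by
  obtain ⟨us, _ | ⟨b, r⟩⟩ := c <;> obtain ⟨us', r'⟩ := q
  · simp [eqnStep]
  · by_cases h : a = b
    · subst h; simp [eqnStep, and_comm]
    · simp [eqnStep, h, Ne.symm h]

theorem eqnStep_none_eq_some {c q : List (List Γ) × List Γ} :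
    eqnStep c none = some q ↔ ∃ u, c.1 = u :: q.1 ∧ c.2 = u ++ q.2 := by
  obtain ⟨_ | ⟨u, us⟩, r⟩ := c <;> obtain ⟨us', r'⟩ := q
  · cases r <;> simp [eqnStep]
  · by_cases h : u <+: r
    · obtain ⟨t, rfl⟩ := h
      simp [eqnStep, and_comm, eq_comm]
    · simp only [eqnStep, h, if_false, reduceCtorEq, false_iff]
      rintro ⟨_, ⟨rfl, -⟩, rfl⟩
      exact h (List.prefix_append _ _)

def eqnDFA (us : List (List Γ)) (w : List Γ) :
    PartialDFA (Option Γ) (List (List Γ) × List Γ) where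
  step := eqnStep
  start := (us, w)
  accept := {([], [])}

theorem acceptsFrom_eqnDFA (us : List (List Γ)) (w : List Γ) (q : List (List Γ) × List Γ) :
    (eqnDFA us w).acceptsFrom q = seqSolutions q.1 q.2 := by
  refine PartialDFA.acceptsFrom_eq_of_residual _ (fun q => seqSolutions q.1 q.2)
    (fun q => ?_) (fun q a s => ?_) q
  · simp [nil_mem_seqSolutions, eqnDFA, Prod.ext_iff]
  · cases a with
    | some a => simp [some_cons_mem_seqSolutions, eqnDFA, eqnStep_some_eq_some]
    | none =>
      simp only [none_cons_mem_seqSolutions, eqnDFA, eqnStep_none_eq_some]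
      aesop

theorem accepts_eqnDFA {k : ℕ} (u : Fin k → List Γ) (w : List Γ) :
    (eqnDFA (List.ofFn u) w).accepts = eqnSolutions u w := by
  rw [PartialDFA.accepts_eq_acceptsFrom, acceptsFrom_eqnDFA, eqnSolutions_eq_seqSolutions]
  rfl

end SequentialEquationDFA

section Config

variable {Γ : Type*} {us : List (List Γ)} {w : List Γ} {i p : ℕ}
  {q : List (List Γ) × List Γ}

/-- The state of `eqnDFA us w` after reading `i` separators and `p` letters: it depends on
`(i, p)` alone, which is what bounds the reachable part of the product of two such automata. -/
def eqnConfig (us : List (List Γ)) (w : List Γ) (i p : ℕ) : List (List Γ) × List Γ :=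
  (us.drop i, w.drop (p + ((us.take i).map List.length).sum))

theorem eqnConfig_zero_zero : eqnConfig us w 0 0 = (us, w) := by
  simp [eqnConfig]

variable [DecidableEq Γ]

theorem eqnStep_eqnConfig_some {a : Γ} (h : eqnStep (eqnConfig us w i p) (some a) = some q) :
    q = eqnConfig us w i (p + 1) ∧ p < w.length := by
  obtain ⟨hw, hus⟩ := eqnStep_some_eq_some.mp h
  simp only [eqnConfig] at hw hus
  have hlt : p + ((us.take i).map List.length).sum < w.length := by
    by_contra hle
    rw [List.drop_eq_nil_of_le (by omega)] at hw
    simp at hw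
  have hrest := congrArg List.tail hw
  rw [List.tail_drop, List.tail_cons] at hrest
  refine ⟨Prod.ext hus.symm ?_, by omega⟩
  simp only [eqnConfig]
  rw [← hrest, Nat.add_right_comm]

theorem eqnStep_eqnConfig_none (h : eqnStep (eqnConfig us w i p) none = some q) :
    q = eqnConfig us w (i + 1) p ∧ i < us.length := by
  obtain ⟨u, hus, hw⟩ := eqnStep_none_eq_some.mp h
  simp only [eqnConfig] at hw hus
  have hi : i < us.length := by
    by_contra hle
    rw [List.drop_eq_nil_of_le (by omega)] at hus
    simp at hus
  rw [List.drop_eq_getElem_cons hi, List.cons.injEq] at hus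
  obtain ⟨rfl, hus⟩ := hus
  have hrest := congrArg (List.drop us[i].length) hw
  rw [List.drop_drop, List.drop_left] at hrest
  refine ⟨Prod.ext hus.symm ?_, hi⟩
  simp only [eqnConfig]
  rw [← hrest, List.take_add_one, List.getElem?_eq_getElem hi]
  simp only [List.map_append, List.sum_append, Option.toList_some, List.map_cons,
    List.map_nil, List.sum_cons, List.sum_nil, Nat.add_zero, Nat.add_assoc]

end Config

theorem prod_eqnDFA_step_eqnConfig {Γ : Type*} [DecidableEq Γ] {us vs : List (List Γ)}
    {w w' : List Γ} {i p : ℕ} {a : Option Γ}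
    {q : (List (List Γ) × List Γ) × (List (List Γ) × List Γ)}
    (h : ((eqnDFA us w).prod (eqnDFA vs w')).step (eqnConfig us w i p, eqnConfig vs w' i p) a =
      some q) :
    (q = (eqnConfig us w i (p + 1), eqnConfig vs w' i (p + 1)) ∧ p < min w.length w'.length) ∨
      (q = (eqnConfig us w (i + 1) p, eqnConfig vs w' (i + 1) p) ∧ i < us.length) := by
  obtain ⟨h₁, h₂⟩ := PartialDFA.prod_step_eq_some _ _ |>.mp h
  cases a with
  | some a =>
    obtain ⟨hq₁, hp₁⟩ := eqnStep_eqnConfig_some h₁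
    obtain ⟨hq₂, hp₂⟩ := eqnStep_eqnConfig_some h₂
    exact Or.inl ⟨Prod.ext hq₁ hq₂, lt_min hp₁ hp₂⟩
  | none =>
    obtain ⟨hq₁, hi⟩ := eqnStep_eqnConfig_none h₁
    exact Or.inr ⟨Prod.ext hq₁ (eqnStep_eqnConfig_none h₂).1, hi⟩

/-- The intersection of solution languages of two sequential word equations over the same
variable sequence `x₀,…,x_k` is recognized by a (partial) deterministic finite automaton
with at most `(k+1)·(min(|w|, |w'|)+1)` states. -/
theorem eqnSolutions_inter_partialDFA {Γ : Type} (k : ℕ) (u v : Fin k → List Γ)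
    (w w' : List Γ) :
    ∃ (σ : Type) (_ : Fintype σ) (M : PartialDFA (Option Γ) σ),
      Fintype.card σ ≤ (k + 1) * (min w.length w'.length + 1) ∧
      M.accepts = eqnSolutions u w ∩ eqnSolutions v w' := by
  classical
  let M := (eqnDFA (List.ofFn u) w).prod (eqnDFA (List.ofFn v) w')
  let config (ip : Fin (k + 1) × Fin (min w.length w'.length + 1)) : _ × _ :=
    (eqnConfig (List.ofFn u) w ip.1 ip.2, eqnConfig (List.ofFn v) w' ip.1 ip.2)
  have hstart : M.start ∈ Set.range config :=
    ⟨(0, 0), by simp [config, M, eqnConfig_zero_zero, eqnDFA, PartialDFA.prod]⟩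
  have hstep (ip a q) (h : M.step (config ip) a = some q) : q ∈ Set.range config := by
    obtain ⟨⟨i, hi⟩, ⟨p, hp⟩⟩ := ip
    rcases prod_eqnDFA_step_eqnConfig h with ⟨rfl, hp'⟩ | ⟨rfl, hi'⟩
    · exact ⟨(⟨i, hi⟩, ⟨p + 1, Nat.succ_lt_succ hp'⟩), rfl⟩
    · exact ⟨(⟨i + 1, Nat.succ_lt_succ (List.length_ofFn (f := u) ▸ hi')⟩, ⟨p, hp⟩), rfl⟩
  obtain ⟨σ, _, N, hcard, hN⟩ := M.exists_card_le_of_step_mem_range config hstart hstep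
  refine ⟨σ, _, N, by simpa using hcard, ?_⟩
  rw [hN, PartialDFA.accepts_prod, accepts_eqnDFA, accepts_eqnDFA]
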